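/- Let G be a regular graph with n vertices and adjacency eigenvalues λ₁ ≥ ... ≥ λₙ. Let p be a polynomial of degree at most k with p(λ₁) > λ(p), where λ(p) = min_{i∈[2,n]} p(λᵢ), and let W(p) = max_u (p(A))_{uu}. Then α_k(G) ≤ n (W(p) - λ(p)) / (p(λ₁) - λ(p)). -/

import Mathlib

open Polynomial Finset

/-- The independence number of a simple graph: the maximum size of a set of
pairwise non-adjacent vertices. -/
noncomputable def SimpleGraph.indepNum' {V : Type*} [Fintype V] (G : SimpleGraph V) : ℕ :=
  sSup {m | ∃ s : Finset V, s.card = m ∧ ∀ u ∈ s, ∀ v ∈ s, ¬ G.Adj u v}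

/-- The `k`-th power of a graph: distinct vertices are adjacent iff
their distance in `G` is (finite and) at most `k`. -/
def SimpleGraph.power {V : Type*} (G : SimpleGraph V) (k : ℕ) : SimpleGraph V where
  Adj u v := u ≠ v ∧ G.Reachable u v ∧ G.dist u v ≤ k
  symm := by
    constructor
    intro u v ⟨h1, h2, h3⟩
    exact ⟨h1.symm, h2.symm, by rwa [SimpleGraph.dist_comm]⟩
  loopless := by constructor; intro u ⟨h, _⟩; exact h rfl

/-- The `k`-independence number: the maximum size of a set of vertices at
pairwise distance greater than `k`. -/
noncomputable def SimpleGraph.kIndepNum {V : Type*} [Fintype V] (G : SimpleGraph V) (k : ℕ) : ℕ :=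
  (G.power k).indepNum'

/-!
Let `Q = p(A) - λ(p) I`. The eigenvalues of `A` are the `λᵢ`, and `p(λᵢ) ≥ λ(p)` for every `i`
(for `i = 1` by hypothesis), so `Q` is positive semidefinite. The all-ones vector `𝟙` is an
eigenvector of `A` for `d`, which bounds the spectrum by Gershgorin, so `λ₁ = d` and
`Q 𝟙 = (p(λ₁) - λ(p)) 𝟙`. Entries of `Aʲ` count walks of length `j`, so `Q` vanishes between
distinct vertices of a `k`-independent set `S`, and for its characteristic vector `χ`,
`χᵀ Q χ ≤ |S| (W(p) - λ(p))`. Cauchy–Schwarz for the semidefinite form `Q` gives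
`(𝟙ᵀ χ)² (p(λ₁) - λ(p)) ≤ (𝟙ᵀ 𝟙) χᵀ Q χ`, that is `|S|² (p(λ₁) - λ(p)) ≤ n |S| (W(p) - λ(p))`.
-/

open Matrix

theorem Matrix.spectrum_eq_range_of_charpoly_eq_prod {K n : Type*} [Field K] [Fintype n]
    [DecidableEq n] {A : Matrix n n K} {lam : n → K}
    (h : A.charpoly = ∏ i, (X - C (lam i))) : spectrum K A = Set.range lam := by
  ext r
  rw [mem_spectrum_iff_isRoot_charpoly, h, IsRoot, eval_prod, Finset.prod_eq_zero_iff]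
  simp [sub_eq_zero, eq_comm]

theorem Matrix.aeval_mulVec_of_mulVec_eq_smul {R n : Type*} [CommRing R] [Fintype n]
    [DecidableEq n] {A : Matrix n n R} {t : R} {w : n → R} (hw : A *ᵥ w = t • w) (q : R[X]) :
    aeval A q *ᵥ w = q.eval t • w := by
  induction q using Polynomial.induction_on' with
  | add p q hp hq => rw [map_add, add_mulVec, hp, hq, eval_add, add_smul]
  | monomial k a =>
    have hpow : A ^ k *ᵥ w = t ^ k • w := by
      induction k with
      | zero => simp
      | succ k ih => rw [pow_succ', ← mulVec_mulVec, ih, mulVec_smul, hw, smul_smul, pow_succ]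
    rw [aeval_monomial, ← Algebra.smul_def, smul_mulVec, hpow, smul_smul, eval_monomial]

open scoped MatrixOrder in
theorem Matrix.IsHermitian.posSemidef_aeval {n : Type*} [Fintype n] [DecidableEq n]
    {A : Matrix n n ℝ} (hA : A.IsHermitian) {q : ℝ[X]}
    (hq : ∀ x ∈ spectrum ℝ A, 0 ≤ q.eval x) : (aeval A q).PosSemidef := by
  rw [← nonneg_iff_posSemidef, ← cfc_polynomial q A hA.isSelfAdjoint]
  exact cfc_nonneg hq

theorem Matrix.PosSemidef.sq_dotProduct_mul_le {n : Type*} [Fintype n] {Q : Matrix n n ℝ}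
    (hQ : Q.PosSemidef) {θ : ℝ} {w : n → ℝ} (hw : Q *ᵥ w = θ • w) (x : n → ℝ) :
    (w ⬝ᵥ x) ^ 2 * θ ≤ (w ⬝ᵥ w) * (x ⬝ᵥ Q *ᵥ x) := by
  have hsymm : w ⬝ᵥ Q *ᵥ x = θ * (w ⬝ᵥ x) := by
    rw [dotProduct_mulVec, ← mulVec_transpose, ← conjTranspose_eq_transpose_of_trivial,
      hQ.isHermitian.eq, hw, smul_dotProduct, smul_eq_mul]
  -- `(w ⬝ᵥ w) x - (w ⬝ᵥ x) w` is a multiple of the component of `x` orthogonal to `w`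
  have hproj := hQ.dotProduct_mulVec_nonneg ((w ⬝ᵥ w) • x - (w ⬝ᵥ x) • w)
  simp only [star_trivial, mulVec_sub, mulVec_smul, hw, sub_dotProduct, dotProduct_sub,
    smul_dotProduct, dotProduct_smul, hsymm, smul_eq_mul, dotProduct_comm x w] at hproj
  obtain hpos | hzero := (dotProduct_self_star_nonneg w).lt_or_eq
  · rw [star_trivial] at hpos
    refine sub_nonneg.mp <| (mul_nonneg_iff_of_pos_left hpos).mp ?_
    linear_combination hproj
  · rw [eq_comm, dotProduct_self_star_eq_zero] at hzero
    simp [hzero]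

theorem Matrix.indicator_dotProduct_mulVec_indicator {n R : Type*} [Fintype n]
    [NonAssocSemiring R] (M : Matrix n n R) (s : Finset n) :
    (s : Set n).indicator 1 ⬝ᵥ M *ᵥ (s : Set n).indicator 1 = ∑ u ∈ s, ∑ v ∈ s, M u v := by
  classical
  simp [dotProduct, mulVec, Set.indicator_apply, Finset.sum_ite_mem]

theorem Matrix.PosSemidef.card_sq_mul_le {n : Type*} [Fintype n] {Q : Matrix n n ℝ}
    (hQ : Q.PosSemidef) {θ : ℝ} (hθ : Q *ᵥ 1 = θ • 1) {s : Finset n}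
    (hoff : ∀ u ∈ s, ∀ v ∈ s, u ≠ v → Q u v = 0) :
    (#s : ℝ) ^ 2 * θ ≤ Fintype.card n * ∑ u ∈ s, Q u u := by
  classical
  have h := hQ.sq_dotProduct_mul_le hθ ((s : Set n).indicator 1)
  rw [indicator_dotProduct_mulVec_indicator] at h
  convert h using 2
  · simp [dotProduct, Set.indicator_apply]
  · simp [dotProduct]
  · exact Finset.sum_congr rfl fun u hu =>
      (Finset.sum_eq_single_of_mem u hu fun v hv hvu => hoff u hu v hv hvu.symm).symm

theorem Matrix.PosSemidef.card_le_div {n : Type*} [Fintype n] {Q : Matrix n n ℝ}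
    (hQ : Q.PosSemidef) {θ : ℝ} (hθ : 0 < θ) (h1 : Q *ᵥ 1 = θ • 1) {s : Finset n}
    (hs : s.Nonempty) (hoff : ∀ u ∈ s, ∀ v ∈ s, u ≠ v → Q u v = 0) {c : ℝ}
    (hdiag : ∀ u ∈ s, Q u u ≤ c) : (#s : ℝ) ≤ Fintype.card n * c / θ := by
  have hsq := hQ.card_sq_mul_le h1 hoff
  have hsum : ∑ u ∈ s, Q u u ≤ #s * c := by
    simpa using Finset.sum_le_sum hdiag
  have hcard : (0 : ℝ) < #s := by exact_mod_cast hs.card_pos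
  rw [le_div_iff₀ hθ]
  nlinarith

namespace SimpleGraph

theorem indepNum'_eq_indepNum {V : Type*} [Fintype V] (G : SimpleGraph V) :
    G.indepNum' = G.indepNum := by
  unfold indepNum' indepNum
  congr! 3 with m
  refine exists_congr fun s => ?_
  rw [isNIndepSet_iff, isIndepSet_iff, and_comm]
  refine and_congr_left fun _ => ⟨fun h u hu v hv _ => h u hu v hv, fun h u hu v hv => ?_⟩
  by_cases huv : u = v
  · exact huv ▸ G.irrefl
  · exact h hu hv huv

theorem one_le_indepNum {V : Type*} [Finite V] [Nonempty V] (G : SimpleGraph V) :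
    1 ≤ G.indepNum := by
  obtain ⟨v⟩ := ‹Nonempty V›
  have h : G.IsIndepSet (({v} : Finset V) : Set V) := by simp
  simpa using h.card_le_indepNum

theorem lt_length_of_not_power_adj {V : Type*} (G : SimpleGraph V) {k : ℕ} {u v : V}
    (huv : u ≠ v) (h : ¬(G.power k).Adj u v) (w : G.Walk u v) : k < w.length := by
  by_contra! hle
  exact h ⟨huv, w.reachable, (G.dist_le w).trans hle⟩

theorem adjMatrix_mulVec_one_of_regular {V : Type*} [Fintype V] (G : SimpleGraph V)
    [DecidableRel G.Adj] {d : ℕ} (hreg : G.IsRegularOfDegree d) :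
    G.adjMatrix ℝ *ᵥ 1 = (d : ℝ) • 1 := by
  ext v
  simpa using G.adjMatrix_mulVec_const_apply_of_regular (a := (1 : ℝ)) hreg (v := v)

variable {V : Type*} [Fintype V] [DecidableEq V] (G : SimpleGraph V) [DecidableRel G.Adj]

theorem aeval_adjMatrix_apply_eq_zero {R : Type*} [CommRing R] {u v : V} (p : R[X])
    (h : ∀ w : G.Walk u v, p.natDegree < w.length) : aeval (G.adjMatrix R) p u v = 0 := by
  rw [aeval_eq_sum_range, Matrix.sum_apply]
  refine Finset.sum_eq_zero fun i hi => ?_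
  rw [Matrix.smul_apply, adjMatrix_pow_apply_eq_card_walk, Fintype.card_eq_zero_iff.mpr,
    Nat.cast_zero, smul_zero]
  refine ⟨fun w => (h w.1).not_ge ?_⟩
  have hlen : w.1.length = i := w.2
  have hi' := Finset.mem_range.mp hi
  omega

theorem le_of_mem_spectrum_adjMatrix {d : ℕ} (hreg : G.IsRegularOfDegree d) {μ : ℝ}
    (hμ : μ ∈ spectrum ℝ (G.adjMatrix ℝ)) : μ ≤ d := by
  rw [← spectrum_toLin', ← Module.End.hasEigenvalue_iff_mem_spectrum] at hμ
  obtain ⟨u, hu⟩ := eigenvalue_mem_ball hμ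
  have hrow : ∑ v ∈ univ.erase u, ‖G.adjMatrix ℝ u v‖ = d := by
    rw [Finset.sum_erase _ (by simp), ← hreg u, ← card_neighborFinset_eq_degree,
      neighborFinset_eq_filter]
    simp [adjMatrix_apply, apply_ite]
  rw [Metric.mem_closedBall, hrow, adjMatrix_apply, if_neg G.irrefl, Real.dist_eq,
    sub_zero] at hu
  exact (le_abs_self μ).trans hu

theorem natCast_mem_spectrum_adjMatrix [Nonempty V] {d : ℕ} (hreg : G.IsRegularOfDegree d) :
    (d : ℝ) ∈ spectrum ℝ (G.adjMatrix ℝ) := by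
  rw [← spectrum_toLin']
  refine Module.End.HasEigenvalue.mem_spectrum <|
    Module.End.hasEigenvalue_of_hasEigenvector (x := 1) ⟨?_, one_ne_zero⟩
  rw [Module.End.mem_eigenspace_iff, toLin'_apply, G.adjMatrix_mulVec_one_of_regular hreg]

theorem isGreatest_spectrum_adjMatrix_of_regular [Nonempty V] {d : ℕ}
    (hreg : G.IsRegularOfDegree d) : IsGreatest (spectrum ℝ (G.adjMatrix ℝ)) d :=
  ⟨G.natCast_mem_spectrum_adjMatrix hreg, fun _ => G.le_of_mem_spectrum_adjMatrix hreg⟩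

end SimpleGraph

theorem ratio_type_bound_alpha_k_general {n d k : ℕ} (hn : 0 < n) (G : SimpleGraph (Fin n))
    [DecidableRel G.Adj] (hreg : G.IsRegularOfDegree d)
    (lam : Fin n → ℝ) (hlam : Antitone lam)
    (hchar : (G.adjMatrix ℝ).charpoly = ∏ i, (X - C (lam i)))
    (p : Polynomial ℝ) (hp : p.natDegree ≤ k) (W lamp : ℝ)
    (hW : IsGreatest {x | ∃ u, x = (aeval (G.adjMatrix ℝ) p) u u} W)
    (hlamp : IsLeast {x | ∃ i, i ≠ ⟨0, hn⟩ ∧ x = p.eval (lam i)} lamp)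
    (hgt : lamp < p.eval (lam ⟨0, hn⟩)) :
    (G.kIndepNum k : ℝ) ≤ n * (W - lamp) / (p.eval (lam ⟨0, hn⟩) - lamp) := by
  have : Nonempty (Fin n) := ⟨⟨0, hn⟩⟩
  set Q := aeval (G.adjMatrix ℝ) (p - C lamp)
  have hspec := spectrum_eq_range_of_charpoly_eq_prod hchar
  have hlam0 : lam ⟨0, hn⟩ = d := by
    refine IsGreatest.unique ?_ (G.isGreatest_spectrum_adjMatrix_of_regular hreg)
    rw [hspec]
    exact ⟨Set.mem_range_self _, Set.forall_mem_range.mpr fun j => hlam (Nat.zero_le j.val)⟩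
  have hQ : Q.PosSemidef := (G.isHermitian_adjMatrix ℝ).posSemidef_aeval <| by
    rw [hspec, Set.forall_mem_range]
    intro j
    rw [eval_sub, eval_C, sub_nonneg]
    by_cases hj : j = ⟨0, hn⟩
    · exact hj ▸ hgt.le
    · exact hlamp.2 ⟨j, hj, rfl⟩
  have hQ1 : Q *ᵥ 1 = (p.eval (lam ⟨0, hn⟩) - lamp) • 1 := by
    rw [aeval_mulVec_of_mulVec_eq_smul (G.adjMatrix_mulVec_one_of_regular hreg), hlam0,
      eval_sub, eval_C]
  obtain ⟨s, hs⟩ := (G.power k).exists_isNIndepSet_indepNum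
  have hne : s.Nonempty := Finset.card_pos.mp (hs.card_eq ▸ (G.power k).one_le_indepNum)
  have hoff : ∀ u ∈ s, ∀ v ∈ s, u ≠ v → Q u v = 0 := fun u hu v hv huv =>
    G.aeval_adjMatrix_apply_eq_zero _ fun w => (natDegree_sub_C.trans_le hp).trans_lt
      (G.lt_length_of_not_power_adj huv (hs.isIndepSet hu hv huv) w)
  have hbound := hQ.card_le_div (sub_pos.mpr hgt) hQ1 hne hoff (c := W - lamp) fun u _ => by
    simpa [Q, algebraMap_eq_diagonal] using hW.2 ⟨u, rfl⟩
  rwa [Fintype.card_fin, hs.card_eq, ← SimpleGraph.indepNum'_eq_indepNum] at hbound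

/-- **Ratio-type bound for `α_k` (Abiad–Coutinho–Fiol).** For a connected regular graph `G`
and a polynomial `p` of degree at most `k` with `p(λ₁) > λ(p) = min_{i∈[2,n]} p(λᵢ)`,
`α_k(G) ≤ n (W(p) - λ(p)) / (p(λ₁) - λ(p))`. -/
theorem ratio_type_bound_alpha_k {n d k : ℕ} (hn : 0 < n) (G : SimpleGraph (Fin n))
    [DecidableRel G.Adj] (hconn : G.Connected) (hreg : G.IsRegularOfDegree d)
    (lam : Fin n → ℝ) (hlam : Antitone lam)
    (hchar : (G.adjMatrix ℝ).charpoly = ∏ i, (X - C (lam i)))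
    (p : Polynomial ℝ) (hp : p.natDegree ≤ k) (W lamp : ℝ)
    (hW : IsGreatest {x | ∃ u, x = (aeval (G.adjMatrix ℝ) p) u u} W)
    (hlamp : IsLeast {x | ∃ i, i ≠ ⟨0, hn⟩ ∧ x = p.eval (lam i)} lamp)
    (hgt : lamp < p.eval (lam ⟨0, hn⟩)) :
    (G.kIndepNum k : ℝ) ≤ n * (W - lamp) / (p.eval (lam ⟨0, hn⟩) - lamp) :=
  ratio_type_bound_alpha_k_general hn G hreg lam hlam hchar p hp W lamp hW hlamp hgt
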